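/- arXiv:1512.07019 — 4 statements merged into one kernel-verified Lean document; each statement's English description precedes it below -/
import Mathlib

section
/- Let S and U be finite sets and let C be a finite set of constraints each equipped with a user-independent constraint weight function ω_c. If the complete plans π, π' : S → U are equivalent (they have the same pattern), then ω_C(π) = ω_C(π'). -/
/-- If all constraint weight functions are user-independent and the
complete plans `π, π'` are equivalent (same pattern), then their constraint
weights coincide. -/
theorem constraint_weight_eq_of_equivalent
    {S U : Type*} [Fintype S] [Fintype U]
    {ι : Type*} [Fintype ι]
    (ωc : ι → (S → U) → NNRat)
    (hUI : ∀ (c : ι) (φ : Equiv.Perm U) (π : S → U), ωc c (φ ∘ π) = ωc c π)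
    (π π' : S → U)
    (hequiv : ∀ s s' : S, π s = π s' ↔ π' s = π' s') :
    (∑ c, ωc c π) = ∑ c, ωc c π' := by
  classical
  -- build a bijection between the ranges of π and π'
  let f : {u // u ∈ Set.range π} → {u // u ∈ Set.range π'} :=
    fun u => ⟨π' (Classical.choose u.2), ⟨_, rfl⟩⟩
  have hchoose : ∀ (u : {u // u ∈ Set.range π}), π (Classical.choose u.2) = u.1 :=
    fun u => Classical.choose_spec u.2
  have hf : Function.Bijective f := by
    constructor
    · rintro ⟨u, hu⟩ ⟨v, hv⟩ h
      have h' : π' (Classical.choose hu) = π' (Classical.choose hv) :=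
        congrArg Subtype.val h
      have := (hequiv _ _).2 h'
      have h1 : π (Classical.choose hu) = u := Classical.choose_spec hu
      have h2 : π (Classical.choose hv) = v := Classical.choose_spec hv
      exact Subtype.ext (show u = v by rw [← h1, ← h2]; exact this)
    · rintro ⟨v, s, rfl⟩
      refine ⟨⟨π s, ⟨s, rfl⟩⟩, ?_⟩
      apply Subtype.ext
      exact (hequiv _ _).1 (hchoose ⟨π s, ⟨s, rfl⟩⟩)
  let e : {u // u ∈ Set.range π} ≃ {u // u ∈ Set.range π'} := Equiv.ofBijective f hf
  let φ : Equiv.Perm U := e.extendSubtype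
  have hφ : ∀ s, φ (π s) = π' s := by
    intro s
    have hmem : π s ∈ Set.range π := ⟨s, rfl⟩
    have h1 : φ (π s) = (e ⟨π s, hmem⟩ : {u // u ∈ Set.range π'}).1 :=
      e.extendSubtype_apply_of_mem (π s) hmem
    have h2 : (e ⟨π s, hmem⟩ : {u // u ∈ Set.range π'}).1
        = π' (Classical.choose hmem) := rfl
    rw [h1, h2]
    exact (hequiv _ _).1 (hchoose ⟨π s, hmem⟩)
  have hcomp : φ ∘ π = π' := funext hφ
  calc (∑ c, ωc c π) = ∑ c, ωc c (φ ∘ π) := by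
        simp [hUI]
    _ = ∑ c, ωc c π' := by rw [hcomp]
end

section
/- For every integer k ≥ 1 there exists an instance of BO-WSP with user-independent weighted constraints — that is, a finite set S of steps with |S| = k, a finite set U of users, a weighted set-authorization function ω : 2^S × U → ℚ≥0, and a finite set C of constraints each equipped with a user-independent constraint weight function — such that the number of distinct weight pairs (ω_A(π), ω_C(π)) taken over all Pareto optimal complete plans π : S → U equals the Bell number B_k, i.e., the number of partitions of S. In particular, a Pareto front of this instance consists of B_k points. -/
noncomputable section ParetoBellAux
variable (k : ℕ)

noncomputable section ParetoBell

variable (k : ℕ)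

noncomputable def pbG : Set (Fin k) → ℕ := fun T => (Fintype.equivFin (Set (Fin k)) T : ℕ)

lemma pbG_inj : Function.Injective (pbG k) := fun T T' h =>
  (Fintype.equivFin (Set (Fin k))).injective (Fin.val_injective h)

lemma pbG_lt (T : Set (Fin k)) : pbG k T < Fintype.card (Set (Fin k)) :=
  (Fintype.equivFin (Set (Fin k)) T).isLt

open Classical in
noncomputable def pbF : Set (Fin k) → ℕ := fun T => if T = ∅ then 0 else 2 ^ pbG k T

noncomputable def pbA : (Fin k → Fin k) → ℕ := fun π => ∑ u, pbF k (π ⁻¹' {u})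

noncomputable def pbM : ℕ := k * 2 ^ Fintype.card (Set (Fin k))

lemma pbA_le (π : Fin k → Fin k) : pbA k π ≤ pbM k := by
  have h : ∀ u : Fin k, pbF k (π ⁻¹' {u}) ≤ 2 ^ Fintype.card (Set (Fin k)) := by
    intro u
    unfold pbF
    split
    · positivity
    · exact Nat.pow_le_pow_right (by norm_num) (pbG_lt k _).le
  calc pbA k π ≤ ∑ _u : Fin k, 2 ^ Fintype.card (Set (Fin k)) :=
        Finset.sum_le_sum fun u _ => h u
    _ = pbM k := by simp [pbM, mul_comm]

noncomputable def pbC (s : Setoid (Fin k)) : Finset (Set (Fin k)) :=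
  (Set.toFinite s.classes).toFinset

lemma mem_pbC {s : Setoid (Fin k)} {T : Set (Fin k)} :
    T ∈ pbC k s ↔ T ∈ s.classes := Set.Finite.mem_toFinset _

open Classical in
lemma pbA_eq_sum_classes (π : Fin k → Fin k) :
    pbA k π = ∑ T ∈ pbC k (Setoid.ker π), 2 ^ pbG k T := by
  have h1 : pbA k π =
      ∑ u ∈ Finset.univ.filter (fun u => π ⁻¹' {u} ≠ ∅), 2 ^ pbG k (π ⁻¹' {u}) := by
    rw [Finset.sum_filter]
    unfold pbA pbF
    apply Finset.sum_congr rfl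
    intro u _
    by_cases h : π ⁻¹' {u} = ∅ <;> simp [h]
  have himg : (Finset.univ.filter (fun u => π ⁻¹' {u} ≠ ∅)).image (fun u => π ⁻¹' {u})
      = pbC k (Setoid.ker π) := by
    ext T
    simp only [Finset.mem_image, Finset.mem_filter, Finset.mem_univ, true_and, mem_pbC]
    constructor
    · rintro ⟨u, hne, rfl⟩
      obtain ⟨a, ha⟩ := Set.nonempty_iff_ne_empty.2 hne
      have hu : π a = u := ha
      refine ⟨a, ?_⟩
      ext x
      simp [Setoid.ker, Set.mem_preimage, ← hu, Function.onFun]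
    · rintro ⟨y, rfl⟩
      refine ⟨π y, ?_, ?_⟩
      · intro h
        have : y ∈ (∅ : Set (Fin k)) := h ▸ (rfl : π y = π y)
        exact this
      · ext x
        simp [Setoid.ker, Set.mem_preimage, Function.onFun]
  have hinj : ∀ x ∈ Finset.univ.filter (fun u => π ⁻¹' {u} ≠ ∅),
      ∀ y ∈ Finset.univ.filter (fun u => π ⁻¹' {u} ≠ ∅),
      π ⁻¹' {x} = π ⁻¹' {y} → x = y := by
    intro x hx y hy hxy
    simp only [Finset.mem_filter] at hx
    obtain ⟨a, ha⟩ := Set.nonempty_iff_ne_empty.2 hx.2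
    have h1 : π a = x := ha
    have h2 : π a = y := by rw [hxy] at ha; exact ha
    rw [← h1, h2]
  rw [h1, ← himg, Finset.sum_image hinj]

lemma pbsum_inj {s₁ s₂ : Finset (Set (Fin k))}
    (h : ∑ T ∈ s₁, 2 ^ pbG k T = ∑ T ∈ s₂, 2 ^ pbG k T) : s₁ = s₂ := by
  classical
  have e : ∀ s : Finset (Set (Fin k)), ∑ T ∈ s, 2 ^ pbG k T = ∑ j ∈ s.image (pbG k), 2 ^ j :=
    fun s => (Finset.sum_image (fun x _ y _ hxy => pbG_inj k hxy)).symm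
  have himg : s₁.image (pbG k) = s₂.image (pbG k) := by
    have := congrArg (fun n => n.bitIndices.toFinset) (by rw [← e, ← e]; exact h :
      ∑ j ∈ s₁.image (pbG k), 2 ^ j = ∑ j ∈ s₂.image (pbG k), 2 ^ j)
    simpa using this
  exact Finset.image_injective (pbG_inj k) himg

lemma pbA_eq_iff {π π' : Fin k → Fin k} :
    pbA k π = pbA k π' ↔ Setoid.ker π = Setoid.ker π' := by
  constructor
  · intro h
    rw [pbA_eq_sum_classes, pbA_eq_sum_classes] at h
    have := pbsum_inj k h
    have hcl : (Setoid.ker π).classes = (Setoid.ker π').classes := by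
      have h2 := congrArg (fun t : Finset (Set (Fin k)) => (t : Set (Set (Fin k)))) this
      simpa only [pbC, Set.Finite.coe_toFinset] using h2
    exact Setoid.classes_inj.2 hcl
  · intro h
    rw [pbA_eq_sum_classes, pbA_eq_sum_classes, h]

lemma pbker_surj : Function.Surjective (fun π : Fin k → Fin k => Setoid.ker π) := by
  intro s
  classical
  have hcard : Fintype.card (Quotient s) ≤ Fintype.card (Fin k) :=
    Fintype.card_quotient_le s
  obtain ⟨e⟩ := Function.Embedding.nonempty_of_card_le hcard
  refine ⟨e ∘ (Quotient.mk'' : Fin k → Quotient s), ?_⟩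
  show Setoid.ker (e ∘ (Quotient.mk'' : Fin k → Quotient s)) = s
  have h1 : Setoid.ker (e ∘ (Quotient.mk'' : Fin k → Quotient s))
      = Setoid.ker (Quotient.mk'' : Fin k → Quotient s) := by
    ext a b
    exact ⟨fun h => e.injective h, fun h => congrArg e h⟩
  rw [h1, Setoid.ker_mk_eq]

end ParetoBell

lemma pbA_perm (k : ℕ) (φ : Equiv.Perm (Fin k)) (π : Fin k → Fin k) :
    pbA k (⇑φ ∘ π) = pbA k π := by
  unfold pbA
  refine (Fintype.sum_equiv φ _ _ ?_).symm
  intro x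
  congr 1
  ext y
  simp [Set.mem_preimage, φ.injective.eq_iff]

end ParetoBellAux

/- STATEMENT 7: For every `k ≥ 1` there is an instance of BO-WSP with
user-independent weighted constraints — a set `S` of `k` steps (here `Fin k`), a
finite set `U` of users (here `Fin m`), a weighted set-authorization function `ω`
and a finite family of user-independent constraint weight functions `ωc` — whose
set of weight pairs `(ω_A π, ω_C π)` over Pareto optimal complete plans `π` has
exactly `B_k` elements, `B_k` being the number of partitions of `S` (the Bell
number). -/
theorem pareto_front_of_size_bell (k : ℕ) (hk : 1 ≤ k) :
    ∃ (m : ℕ) (ω : Set (Fin k) → Fin m → NNRat) (n : ℕ)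
      (ωc : Fin n → (Fin k → Fin m) → NNRat),
      (∀ u : Fin m, ω ∅ u = 0) ∧
      (∀ (c : Fin n) (φ : Equiv.Perm (Fin m)) (π : Fin k → Fin m),
        ωc c (φ ∘ π) = ωc c π) ∧
      {pq : NNRat × NNRat | ∃ π : Fin k → Fin m,
        (¬ ∃ π' : Fin k → Fin m,
            (∑ c, ωc c π') ≤ (∑ c, ωc c π) ∧
            (∑ u, ω (π' ⁻¹' {u}) u) ≤ (∑ u, ω (π ⁻¹' {u}) u) ∧
            (∑ c, ωc c π') + (∑ u, ω (π' ⁻¹' {u}) u) <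
              (∑ c, ωc c π) + (∑ u, ω (π ⁻¹' {u}) u)) ∧
        pq = ((∑ u, ω (π ⁻¹' {u}) u), (∑ c, ωc c π))}.ncard
        = Nat.card (Setoid (Fin k)) := by
  refine ⟨k, fun T _ => (pbF k T : NNRat), 1,
    fun _ π => ((pbM k - pbA k π : ℕ) : NNRat), ?_, ?_, ?_⟩
  · intro u; simp [pbF]
  · intro c φ π
    show ((pbM k - pbA k (⇑φ ∘ π) : ℕ) : NNRat) = ((pbM k - pbA k π : ℕ) : NNRat)
    rw [pbA_perm]
  · -- abbreviations
    have sumω : ∀ π : Fin k → Fin k,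
        (∑ u, ((pbF k (π ⁻¹' {u}) : NNRat))) = ((pbA k π : ℕ) : NNRat) := by
      intro π; rw [pbA]; push_cast; rfl
    have sumc : ∀ π : Fin k → Fin k,
        (∑ _c : Fin 1, ((pbM k - pbA k π : ℕ) : NNRat)) = ((pbM k - pbA k π : ℕ) : NNRat) := by
      intro π; simp
    have total : ∀ π : Fin k → Fin k,
        ((pbM k - pbA k π : ℕ) : NNRat) + ((pbA k π : ℕ) : NNRat) = ((pbM k : ℕ) : NNRat) := by
      intro π
      rw [← Nat.cast_add, Nat.sub_add_cancel (pbA_le k π)]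
    have hset : {pq : NNRat × NNRat | ∃ π : Fin k → Fin k,
        (¬ ∃ π' : Fin k → Fin k,
            (∑ c : Fin 1, ((pbM k - pbA k π' : ℕ) : NNRat)) ≤
              (∑ c : Fin 1, ((pbM k - pbA k π : ℕ) : NNRat)) ∧
            (∑ u, ((pbF k (π' ⁻¹' {u}) : NNRat))) ≤ (∑ u, ((pbF k (π ⁻¹' {u}) : NNRat))) ∧
            (∑ c : Fin 1, ((pbM k - pbA k π' : ℕ) : NNRat)) +
              (∑ u, ((pbF k (π' ⁻¹' {u}) : NNRat))) <
              (∑ c : Fin 1, ((pbM k - pbA k π : ℕ) : NNRat)) +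
                (∑ u, ((pbF k (π ⁻¹' {u}) : NNRat)))) ∧
        pq = ((∑ u, ((pbF k (π ⁻¹' {u}) : NNRat))), (∑ c : Fin 1, ((pbM k - pbA k π : ℕ) : NNRat)))}
        = Set.range (fun π : Fin k → Fin k =>
            (((pbA k π : ℕ) : NNRat), ((pbM k - pbA k π : ℕ) : NNRat))) := by
      ext pq
      simp only [Set.mem_setOf_eq, Set.mem_range]
      constructor
      · rintro ⟨π, _, rfl⟩
        exact ⟨π, by rw [sumω, sumc]⟩
      · rintro ⟨π, rfl⟩
        refine ⟨π, ?_, by rw [sumω, sumc]⟩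
        rintro ⟨π', -, -, hlt⟩
        rw [sumc, sumc, sumω, sumω, total, total] at hlt
        exact lt_irrefl _ hlt
    rw [hset]
    set F : (Fin k → Fin k) → NNRat × NNRat := fun π =>
      (((pbA k π : ℕ) : NNRat), ((pbM k - pbA k π : ℕ) : NNRat)) with hF
    set sec : Setoid (Fin k) → (Fin k → Fin k) := Function.surjInv (pbker_surj k) with hsec
    have hseck : ∀ s, Setoid.ker (sec s) = s := fun s =>
      Function.surjInv_eq (pbker_surj k) s
    have hrange : Set.range F = Set.range (F ∘ sec) := by
      apply subset_antisymm
      · rintro pq ⟨π, rfl⟩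
        refine ⟨Setoid.ker π, ?_⟩
        have : pbA k (sec (Setoid.ker π)) = pbA k π :=
          (pbA_eq_iff k).2 (by rw [hseck])
        simp only [Function.comp_apply, hF, this]
      · rintro pq ⟨s, rfl⟩
        exact ⟨sec s, rfl⟩
    have hinj : Function.Injective (F ∘ sec) := by
      intro s s' h
      have h1 : ((pbA k (sec s) : ℕ) : NNRat) = ((pbA k (sec s') : ℕ) : NNRat) :=
        congrArg Prod.fst h
      have h2 : pbA k (sec s) = pbA k (sec s') := Nat.cast_injective h1
      have := (pbA_eq_iff k).1 h2
      rw [hseck, hseck] at this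
      exact this
    rw [hrange, ← Nat.card_coe_set_eq, Nat.card_range_of_injective hinj]
end

section
/- Let (S,U,A,C) be a satisfiable WSP instance, let μ : U → ℚ>0 assign a positive cost to each user, and let M ∈ ℚ with M > Σ_{u∈U} μ(u). Define the weighted set-authorization function ω by ω(∅,u) = 0, ω(T,u) = μ(u) if T ≠ ∅ and (s,u) ∈ A for all s ∈ T, and ω(T,u) = M otherwise. Then: (i) for every authorized complete plan π, ω_A(π) = Σ_{u ∈ π(S)} μ(u), where π(S) is the set of users assigned at least one step; (ii) a complete plan π satisfies ω_A(π) < M if and only if π is authorized; and (iii) every complete plan π that satisfies all constraints in C and minimizes ω_A among the complete plans satisfying all constraints in C is a valid plan whose set of involved users π(S) has minimum total cost Σ_{u ∈ π(S)} μ(u) among all valid complete plans. -/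
/- STATEMENT 9: (Generalized CMUP via BO-WSP.)  For a satisfiable WSP instance,
user costs `μ > 0`, a constant `M > ∑ μ`, and the weighted set-authorization
function `ω` taking value `μ u` on nonempty fully-authorized sets, `M` otherwise
(and `0` on `∅`):
(i) for every authorized complete plan `π`, `ω_A(π) = ∑_{u ∈ π(S)} μ u`;
(ii) a complete plan has `ω_A(π) < M` iff it is authorized;
(iii) every plan satisfying all constraints that minimizes `ω_A` among such plans
is a valid plan whose set of involved users has minimum total cost among all
valid complete plans. -/
theorem cmup_via_bo_wsp
    {S U : Type*} [Fintype S] [Fintype U] [DecidableEq U]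
    (A : S → U → Prop)
    {ι : Type*} [Fintype ι]
    (T : ι → Set S) (Θ : (c : ι) → Set ((T c) → U))
    (hsat : ∃ π : S → U, (∀ s, A s (π s)) ∧ ∀ c, (fun s : (T c) => π s.1) ∈ Θ c)
    (μ : U → ℚ) (hμ : ∀ u, 0 < μ u)
    (M : ℚ) (hM : (∑ u, μ u) < M)
    (ω : Set S → U → ℚ)
    (hω0 : ∀ u : U, ω ∅ u = 0)
    (hω1 : ∀ (X : Set S) (u : U), X.Nonempty → (∀ s ∈ X, A s u) → ω X u = μ u)
    (hω2 : ∀ (X : Set S) (u : U), X.Nonempty → ¬ (∀ s ∈ X, A s u) → ω X u = M) :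
    (∀ π : S → U, (∀ s, A s (π s)) →
        (∑ u, ω (π ⁻¹' {u}) u) = ∑ u ∈ Finset.univ.image π, μ u) ∧
    (∀ π : S → U, (∑ u, ω (π ⁻¹' {u}) u) < M ↔ ∀ s, A s (π s)) ∧
    (∀ π : S → U,
      (∀ c, (fun s : (T c) => π s.1) ∈ Θ c) →
      (∀ π' : S → U, (∀ c, (fun s : (T c) => π' s.1) ∈ Θ c) →
        (∑ u, ω (π ⁻¹' {u}) u) ≤ ∑ u, ω (π' ⁻¹' {u}) u) →
      ((∀ s, A s (π s)) ∧ (∀ c, (fun s : (T c) => π s.1) ∈ Θ c) ∧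
        ∀ π' : S → U,
          ((∀ s, A s (π' s)) ∧ ∀ c, (fun s : (T c) => π' s.1) ∈ Θ c) →
          (∑ u ∈ Finset.univ.image π, μ u) ≤ ∑ u ∈ Finset.univ.image π', μ u)) := by
  classical
  have hsum0 : (0:ℚ) ≤ ∑ u, μ u := Finset.sum_nonneg fun u _ => (hμ u).le
  have hM0 : (0:ℚ) < M := lt_of_le_of_lt hsum0 hM
  have hnn : ∀ (π : S → U) (u : U), 0 ≤ ω (π ⁻¹' {u}) u := by
    intro π u
    rcases Set.eq_empty_or_nonempty (π ⁻¹' {u}) with h | h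
    · rw [h, hω0]
    · by_cases ha : ∀ s ∈ π ⁻¹' {u}, A s u
      · rw [hω1 _ _ h ha]; exact (hμ u).le
      · rw [hω2 _ _ h ha]; exact hM0.le
  have key : ∀ π : S → U, (∀ s, A s (π s)) →
      (∑ u, ω (π ⁻¹' {u}) u) = ∑ u ∈ Finset.univ.image π, μ u := by
    intro π hπ
    have : ∀ u : U, ω (π ⁻¹' {u}) u =
        if u ∈ Finset.univ.image π then μ u else 0 := by
      intro u
      by_cases hu : u ∈ Finset.univ.image π
      · obtain ⟨s, -, hs⟩ := Finset.mem_image.mp hu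
        rw [if_pos hu, hω1]
        · exact ⟨s, by simp [hs]⟩
        · intro s' hs'
          have : π s' = u := hs'
          rw [← this]; exact hπ s'
      · rw [if_neg hu]
        have he : π ⁻¹' {u} = ∅ := by
          ext s
          simp only [Set.mem_preimage, Set.mem_singleton_iff, Set.mem_empty_iff_false,
            iff_false]
          intro h
          exact hu (Finset.mem_image.mpr ⟨s, Finset.mem_univ s, h⟩)
        rw [he, hω0]
    rw [Finset.sum_congr rfl fun u _ => this u]
    rw [Finset.sum_ite_mem, Finset.univ_inter]
  have part2 : ∀ π : S → U, (∑ u, ω (π ⁻¹' {u}) u) < M ↔ ∀ s, A s (π s) := by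
    intro π
    constructor
    · intro hlt
      by_contra hna
      push_neg at hna
      obtain ⟨s, hs⟩ := hna
      have hval : ω (π ⁻¹' {π s}) (π s) = M := by
        apply hω2
        · exact ⟨s, rfl⟩
        · intro hall
          exact hs (hall s rfl)
      have : M ≤ ∑ u, ω (π ⁻¹' {u}) u := by
        rw [← hval]
        exact Finset.single_le_sum (fun u _ => hnn π u) (Finset.mem_univ (π s))
      exact absurd hlt (not_lt.mpr this)
    · intro hπ
      rw [key π hπ]
      calc ∑ u ∈ Finset.univ.image π, μ u ≤ ∑ u, μ u :=
            Finset.sum_le_sum_of_subset_of_nonneg (Finset.subset_univ _)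
              (fun u _ _ => (hμ u).le)
        _ < M := hM
  refine ⟨key, part2, ?_⟩
  intro π hθ hmin
  obtain ⟨π₀, hπ₀A, hπ₀Θ⟩ := hsat
  have hπA : ∀ s, A s (π s) := by
    rw [← part2]
    calc (∑ u, ω (π ⁻¹' {u}) u) ≤ ∑ u, ω (π₀ ⁻¹' {u}) u := hmin π₀ hπ₀Θ
      _ < M := (part2 π₀).mpr hπ₀A
  refine ⟨hπA, hθ, ?_⟩
  intro π' ⟨hπ'A, hπ'Θ⟩
  calc (∑ u ∈ Finset.univ.image π, μ u) = ∑ u, ω (π ⁻¹' {u}) u := (key π hπA).symm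
    _ ≤ ∑ u, ω (π' ⁻¹' {u}) u := hmin π' hπ'Θ
    _ = ∑ u ∈ Finset.univ.image π', μ u := key π' hπ'A
end

section
/- Let W = ((S,<),U,A,C) be a constrained workflow authorization schema with |S| = k in which every constraint in C is user-independent, and let t ∈ ℕ. Let U_m ⊆ U be a subset such that for every nonempty T ⊆ S, either N(T) ⊆ U_m or |N(T) ∩ U_m| ≥ k + t, where N(T) = {u ∈ U : (s,u) ∈ A for all s ∈ T}. Then the following are equivalent: (a) for every U' ⊆ U with |U \ U'| ≤ t there exists a valid complete plan π : S → U'; (b) for every U'' ⊆ U_m with |U_m \ U''| ≤ t there exists a valid complete plan π : S → U''. In other words, W is statically t-resilient if and only if the schema obtained by restricting the user set to U_m is statically t-resilient. -/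
/- STATEMENT 11: (Static resiliency and marked users.)  Let `W` be a constrained
workflow authorization schema with `k = |S|` steps, all constraints
user-independent, and `Um ⊆ U` such that for every nonempty `T ⊆ S`, either
`N(T) ⊆ Um` or `|N(T) ∩ Um| ≥ k + t`.  Then `W` is statically `t`-resilient iff
the schema restricted to the user set `Um` is statically `t`-resilient. -/
theorem static_resiliency_marked_users_equiv
    {S U : Type*} [Fintype S] [Fintype U] [PartialOrder S]
    (A : S → U → Prop)
    {ι : Type*} [Fintype ι]
    (T : ι → Set S) (Θ : (c : ι) → Set ((T c) → U))
    (hUI : ∀ (c : ι) (θ : (T c) → U) (φ : Equiv.Perm U), θ ∈ Θ c → φ ∘ θ ∈ Θ c)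
    (t : ℕ) (Um : Set U)
    (hmark : ∀ X : Set S, X.Nonempty →
      {u : U | ∀ s ∈ X, A s u} ⊆ Um ∨
        Fintype.card S + t ≤ ({u : U | ∀ s ∈ X, A s u} ∩ Um).ncard) :
    ((∀ U' : Set U, (Set.univ \ U').ncard ≤ t →
        ∃ π : S → U, (∀ s, π s ∈ U') ∧ (∀ s, A s (π s)) ∧
          ∀ c, (fun s : (T c) => π s.1) ∈ Θ c) ↔
      (∀ U'' : Set U, U'' ⊆ Um → (Um \ U'').ncard ≤ t →
        ∃ π : S → U, (∀ s, π s ∈ U'') ∧ (∀ s, A s (π s)) ∧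
          ∀ c, (fun s : (T c) => π s.1) ∈ Θ c)) := by
  classical
  constructor
  · -- hard direction
    intro hres U'' hsub hcard
    set k := Fintype.card S with hk
    have hU' : (Set.univ \ (U'' ∪ Umᶜ)).ncard ≤ t := by
      have he : Set.univ \ (U'' ∪ Umᶜ) = Um \ U'' := by
        ext u; simp [Set.mem_diff]; tauto
      rw [he]; exact hcard
    obtain ⟨π, hπU, hπA, hπC⟩ := hres (U'' ∪ Umᶜ) hU'
    -- range, bad users and good users
    set R : Finset U := Finset.image π Finset.univ with hR
    set B : Finset U := R.filter (fun u => u ∉ Um) with hBdef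
    set G : Finset U := R.filter (fun u => u ∈ Um) with hGdef
    have hGB : G.card + B.card ≤ k := by
      have := Finset.card_filter_add_card_filter_not
        (s := R) (p := fun u => u ∈ Um)
      calc G.card + B.card = R.card := this
        _ ≤ k := Finset.card_image_le.trans (by simp [hk])
    -- candidate replacement sets
    set Nb : U → Finset U := fun b =>
      (Finset.univ.filter (fun u => (∀ s, π s = b → A s u) ∧ u ∈ U'')) \ G with hNbdef
    have hNbcard : ∀ b ∈ B, B.card ≤ (Nb b).card := by
      intro b hb
      have hbR : b ∈ R := (Finset.mem_filter.mp hb).1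
      have hbUm : b ∉ Um := (Finset.mem_filter.mp hb).2
      obtain ⟨s₀, _, hs₀⟩ := Finset.mem_image.mp hbR
      have hX : ({s | π s = b} : Set S).Nonempty := ⟨s₀, hs₀⟩
      have hbN : b ∈ {u : U | ∀ s ∈ ({s | π s = b} : Set S), A s u} := by
        intro s hs; rw [Set.mem_setOf_eq] at hs; rw [← hs]; exact hπA s
      have hcase := hmark {s | π s = b} hX
      have hbig : k + t ≤ ({u : U | ∀ s ∈ ({s | π s = b} : Set S), A s u} ∩ Um).ncard := by
        rcases hcase with h | h
        · exact absurd (h hbN) hbUm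
        · exact h
      -- pass to users also in U''
      have hsub2 : ({u : U | ∀ s ∈ ({s | π s = b} : Set S), A s u} ∩ Um) \ (Um \ U'')
          ⊆ {u : U | (∀ s, π s = b → A s u) ∧ u ∈ U''} := by
        rintro u ⟨⟨hu1, hu2⟩, hu3⟩
        refine ⟨fun s hs => hu1 s hs, ?_⟩
        by_contra hu''
        exact hu3 ⟨hu2, hu''⟩
      have hfin : (Um \ U'').Finite := Set.toFinite _
      have hdiff : k ≤ (({u : U | ∀ s ∈ ({s | π s = b} : Set S), A s u} ∩ Um) \ (Um \ U'')).ncard := by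
        have h1 := Set.ncard_le_ncard_diff_add_ncard
          ({u : U | ∀ s ∈ ({s | π s = b} : Set S), A s u} ∩ Um) (Um \ U'') hfin
        omega
      have hk2 : k ≤ ({u : U | (∀ s, π s = b → A s u) ∧ u ∈ U''}).ncard :=
        hdiff.trans (Set.ncard_le_ncard hsub2 (Set.toFinite _))
      have hkfin : k ≤ (Finset.univ.filter
          (fun u => (∀ s, π s = b → A s u) ∧ u ∈ U'')).card := by
        rwa [Set.ncard_eq_toFinset_card', Set.toFinset_setOf] at hk2
      have hsd := Finset.le_card_sdiff G
        (Finset.univ.filter (fun u => (∀ s, π s = b → A s u) ∧ u ∈ U''))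
      have hgoal : (Nb b).card =
          ((Finset.univ.filter (fun u => (∀ s, π s = b → A s u) ∧ u ∈ U'')) \ G).card := rfl
      omega
    -- Hall's theorem
    have hall : ∀ s : Finset {b // b ∈ B}, s.card ≤ (s.biUnion (fun b => Nb b.1)).card := by
      intro s
      rcases s.eq_empty_or_nonempty with rfl | ⟨b, hbs⟩
      · simp
      · have h1 : s.card ≤ B.card := by
          have := Finset.card_le_univ s
          simpa [Fintype.card_coe] using this
        have h2 : (Nb b.1).card ≤ (s.biUnion (fun b => Nb b.1)).card :=
          Finset.card_le_card (Finset.subset_biUnion_of_mem (fun b : {b // b ∈ B} => Nb b.1) hbs)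
        exact h1.trans ((hNbcard b.1 b.2).trans h2)
    obtain ⟨f, hfinj, hf⟩ :=
      (Finset.all_card_le_biUnion_card_iff_exists_injective (fun b : {b // b ∈ B} => Nb b.1)).mp hall
    -- facts about f
    have hfU'' : ∀ b, f b ∈ U'' := fun b =>
      ((Finset.mem_filter.mp (Finset.mem_sdiff.mp (hf b)).1).2).2
    have hfA : ∀ b, ∀ s, π s = b.1 → A s (f b) := fun b =>
      ((Finset.mem_filter.mp (Finset.mem_sdiff.mp (hf b)).1).2).1
    have hfnG : ∀ b, f b ∉ G := fun b => (Finset.mem_sdiff.mp (hf b)).2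
    have hfUm : ∀ b, f b ∈ Um := fun b => hsub (hfU'' b)
    have hfnB : ∀ b, f b ∉ B := fun b hmem =>
      (Finset.mem_filter.mp hmem).2 (hfUm b)
    -- the involution
    set g : U → U := fun u =>
      if hB : u ∈ B then f ⟨u, hB⟩
      else if h : ∃ b : {b // b ∈ B}, f b = u then (Classical.choose h).1 else u with hgdef
    have hg_of_B : ∀ u (hB : u ∈ B), g u = f ⟨u, hB⟩ := by
      intro u hB; simp [hgdef, hB]
    have hg_of_f : ∀ b : {b // b ∈ B}, g (f b) = b.1 := by
      intro b
      have h1 : f b ∉ B := hfnB b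
      have h2 : ∃ b' : {b // b ∈ B}, f b' = f b := ⟨b, rfl⟩
      have : Classical.choose h2 = b := hfinj (Classical.choose_spec h2)
      simp only [hgdef, dif_neg h1, dif_pos h2, this]
    have hg_other : ∀ u, u ∉ B → (¬ ∃ b : {b // b ∈ B}, f b = u) → g u = u := by
      intro u h1 h2
      simp only [hgdef]
      rw [dif_neg h1, dif_neg h2]
    have hginv : Function.Involutive g := by
      intro u
      by_cases hB : u ∈ B
      · rw [hg_of_B u hB, hg_of_f ⟨u, hB⟩]
      · by_cases h2 : ∃ b : {b // b ∈ B}, f b = u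
        · have hgu : g u = (Classical.choose h2).1 := by
            simp only [hgdef]
            rw [dif_neg hB, dif_pos h2]
          rw [hgu, hg_of_B _ (Classical.choose h2).2]
          have : (⟨(Classical.choose h2).1, (Classical.choose h2).2⟩ : {b // b ∈ B})
              = Classical.choose h2 := rfl
          rw [this, Classical.choose_spec h2]
        · rw [hg_other u hB h2, hg_other u hB h2]
    set φ : Equiv.Perm U := hginv.toPerm g with hφdef
    refine ⟨fun s => g (π s), ?_, ?_, ?_⟩
    · -- membership in U''
      intro s
      show g (π s) ∈ U''
      by_cases hUm : π s ∈ Um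
      · have h1 : π s ∉ B := fun h => (Finset.mem_filter.mp h).2 hUm
        have h2 : ¬ ∃ b : {b // b ∈ B}, f b = π s := by
          rintro ⟨b, hb⟩
          apply hfnG b
          rw [hb]
          exact Finset.mem_filter.mpr ⟨Finset.mem_image.mpr ⟨s, Finset.mem_univ s, rfl⟩, hUm⟩
        rw [hg_other _ h1 h2]
        rcases hπU s with h | h
        · exact h
        · exact absurd hUm h
      · have h1 : π s ∈ B := Finset.mem_filter.mpr
          ⟨Finset.mem_image.mpr ⟨s, Finset.mem_univ s, rfl⟩, hUm⟩
        rw [hg_of_B _ h1]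
        exact hfU'' _
    · -- authorization
      intro s
      show A s (g (π s))
      by_cases hUm : π s ∈ Um
      · have h1 : π s ∉ B := fun h => (Finset.mem_filter.mp h).2 hUm
        have h2 : ¬ ∃ b : {b // b ∈ B}, f b = π s := by
          rintro ⟨b, hb⟩
          apply hfnG b
          rw [hb]
          exact Finset.mem_filter.mpr ⟨Finset.mem_image.mpr ⟨s, Finset.mem_univ s, rfl⟩, hUm⟩
        rw [hg_other _ h1 h2]
        exact hπA s
      · have h1 : π s ∈ B := Finset.mem_filter.mpr
          ⟨Finset.mem_image.mpr ⟨s, Finset.mem_univ s, rfl⟩, hUm⟩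
        rw [hg_of_B _ h1]
        exact hfA ⟨π s, h1⟩ s rfl
    · -- constraints, via user independence
      intro c
      have := hUI c (fun s : (T c) => π s.1) φ (hπC c)
      have heq : (fun s : (T c) => g (π s.1)) = φ ∘ (fun s : (T c) => π s.1) := by
        funext s
        simp [hφdef, Function.Involutive.coe_toPerm]
      rw [heq]
      exact this
  · -- easy direction
    intro hres U' hcard
    have h1 : (Um \ (U' ∩ Um)).ncard ≤ t := by
      refine le_trans (Set.ncard_le_ncard ?_ (Set.toFinite _)) hcard
      rintro u ⟨hu1, hu2⟩
      exact ⟨Set.mem_univ u, fun hu' => hu2 ⟨hu', hu1⟩⟩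
    obtain ⟨π, h1', h2', h3'⟩ := hres (U' ∩ Um) Set.inter_subset_right h1
    exact ⟨π, fun s => (h1' s).1, h2', h3'⟩
end
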